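/- arXiv:2511.11029 — 7 statements merged into one kernel-verified Lean document; each statement's English description precedes it below -/
import Mathlib

section
/- Let α be a linearly ordered type, let s be a multiset over α, and let g be a permutation of α. Then sort(map g s) ≤lex map g (sort s), where sort t denotes the nondecreasing sorted list of the elements of the multiset t, and map g applies g to every element. -/
/-!
Both lists are arrangements of the multiset `map g s`, and a sorted list is the lexicographically
least arrangement of its elements: its head is the minimum, so any other arrangement starts with a
larger element or with the same one, followed by an arrangement of the sorted tail.
-/

theorem List.Pairwise.eq_or_lex_of_perm {α : Type*} [LinearOrder α] {l l' : List α}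
    (hl : l.Pairwise (· ≤ ·)) (hp : l.Perm l') : l = l' ∨ List.Lex (· < ·) l l' := by
  induction l generalizing l' with
  | nil => exact Or.inl hp.nil_eq
  | cons a t ih =>
    obtain _ | ⟨b, t'⟩ := l'
    · exact absurd hp.symm.nil_eq (List.cons_ne_nil a t).symm
    have hab : a ≤ b := by
      obtain rfl | hb := List.mem_cons.mp (hp.mem_iff.mpr List.mem_cons_self)
      exacts [le_rfl, List.rel_of_pairwise_cons hl hb]
    obtain hlt | rfl := hab.lt_or_eq
    · exact Or.inr (List.Lex.rel hlt)
    · obtain rfl | hlex := ih hl.of_cons hp.cons_inv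
      exacts [Or.inl rfl, Or.inr hlex.cons]

theorem Multiset.sort_map_perm_map_sort {α β : Type*} [LinearOrder α] [LinearOrder β]
    (s : Multiset α) (f : α → β) :
    ((s.map f).sort (· ≤ ·)).Perm ((s.sort (· ≤ ·)).map f) := by
  rw [← Multiset.coe_eq_coe, ← Multiset.map_coe, Multiset.sort_eq, Multiset.sort_eq]

/-- Lemma 2(1): the explicit representation of a multiset satisfies
`φ(x^g) ≤lex φ(x)^g`: sorting the image of a multiset under a permutation is
lexicographically at most applying the permutation to the sorted list. -/
theorem sort_map_lex_map_sort {α : Type*} [LinearOrder α]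
    (s : Multiset α) (g : Equiv.Perm α) :
    (s.map g).sort (· ≤ ·) = (s.sort (· ≤ ·)).map g ∨
      List.Lex (· < ·) ((s.map g).sort (· ≤ ·)) ((s.sort (· ≤ ·)).map g) :=
  (Multiset.pairwise_sort _ _).eq_or_lex_of_perm (s.sort_map_perm_map_sort g)
end

section
/- Let α be a linearly ordered type, let s be a finite set over α, and let g be a permutation of α. Then sort(image g s) ≤lex map g (sort s), where sort t denotes the strictly increasing sorted list of the elements of the finite set t, image g s is the image of s under g, and map g applies g to every element of a list. -/
/-- A sorted list is lexicographically minimal among its permutations. -/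
lemma sorted_le_lex_of_perm {α : Type*} [LinearOrder α] :
    ∀ (l l' : List α), l.Pairwise (· ≤ ·) → l.Perm l' →
      l = l' ∨ List.Lex (· < ·) l l'
  | [], l', _, hp => Or.inl (hp.nil_eq)
  | a :: t, l', hs, hp => by
    match l' with
    | [] => exact absurd hp.symm.nil_eq (by simp)
    | b :: t' =>
      have hab : a ≤ b := by
        have hb : b ∈ a :: t := hp.symm.subset (by simp)
        rcases List.mem_cons.mp hb with h | h
        · exact h.ge
        · exact (List.pairwise_cons.mp hs).1 b h
      rcases lt_or_eq_of_le hab with h | h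
      · exact Or.inr (List.Lex.rel h)
      · subst h
        have hp' := hp.cons_inv
        rcases sorted_le_lex_of_perm t t' (List.pairwise_cons.mp hs).2 hp' with h | h
        · exact Or.inl (by rw [h])
        · exact Or.inr (List.Lex.cons h)

/-- Explicit representation of sets: the sorted list of the image of a finite set
under a permutation is lexicographically at most the elementwise image of the
sorted list. -/
theorem finset_sort_image_lex_map_sort {α : Type*} [LinearOrder α]
    (s : Finset α) (g : Equiv.Perm α) :
    (s.image g).sort (· ≤ ·) = (s.sort (· ≤ ·)).map g ∨
      List.Lex (· < ·) ((s.image g).sort (· ≤ ·)) ((s.sort (· ≤ ·)).map g) := by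
  apply sorted_le_lex_of_perm _ _ (Finset.pairwise_sort _ _)
  have h : ((s.image g).sort (· ≤ ·) : Multiset α) = ((s.sort (· ≤ ·)).map g : Multiset α) := by
    rw [Finset.sort_eq, ← Multiset.map_coe, Finset.sort_eq, Finset.image_val,
      Multiset.dedup_eq_self.mpr (Multiset.Nodup.map g.injective s.nodup)]
  exact Multiset.coe_eq_coe.mp h
end

section
/- Let α be a linearly ordered type with a greatest element ⊤, let g be a permutation of α with g(⊤) = ⊤, let s be a finite set over α, and let m be a natural number. Then sort(image g s) ++ replicate(m, ⊤) ≤lex map g (sort s ++ replicate(m, ⊤)), where sort t denotes the strictly increasing sorted list of the elements of the finite set t, replicate(m, ⊤) is the list consisting of m copies of ⊤, ++ is list concatenation, image g s is the image of s under g, and map g applies g to every element of a list. -/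
/-!
Since `g ⊤ = ⊤`, both sides end in the same `m` copies of `⊤`, and `(sort s).map g` is a
permutation of `sort (s.image g)`. A sorted list is lexicographically at most every one of its
permutations, and a strict lexicographic comparison of equally long lists survives appending a
common suffix.
-/

namespace List

theorem Lex.append_of_length_eq {α : Type*} {r : α → α → Prop} {l₁ l₂ : List α}
    (hlen : l₁.length = l₂.length) (h : Lex r l₁ l₂) (t : List α) :
    Lex r (l₁ ++ t) (l₂ ++ t) := by
  induction h with
  | nil => simp at hlen
  | cons _ ih => exact .cons (ih (by simpa using hlen))
  | rel hab => exact .rel hab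

theorem SortedLE.eq_or_lex_of_perm {α : Type*} [LinearOrder α] {l l' : List α}
    (hl : l.SortedLE) (h : l ~ l') : l = l' ∨ Lex (· < ·) l l' := by
  induction l generalizing l' with
  | nil => exact .inl h.nil_eq
  | cons a l ih =>
    obtain _ | ⟨b, l'⟩ := l'
    · exact absurd h.length_eq (by simp)
    have hl' := sortedLE_iff_pairwise.mp hl
    obtain rfl | hne := eq_or_ne a b
    · obtain rfl | hlex := ih (pairwise_cons.mp hl').2.sortedLE h.cons_inv
      · exact .inl rfl
      · exact .inr (.cons hlex)
    · have hab : a ≤ b := by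
        obtain rfl | hb := mem_cons.mp (h.mem_iff.mpr mem_cons_self)
        · exact le_rfl
        · exact (pairwise_cons.mp hl').1 b hb
      exact .inr (.rel (hab.lt_of_ne hne))

end List

theorem Finset.sort_map_perm {α β : Type*} [LinearOrder α] [LinearOrder β] (f : α ↪ β)
    (s : Finset α) : (s.map f).sort.Perm (s.sort.map f) := by
  rw [← Multiset.coe_eq_coe, ← Multiset.map_coe, sort_eq, sort_eq, map_val]

/-- ExplicitVariableSizeDummy representation of sets: padding with a top dummy
value fixed by the symmetry. -/
theorem explicit_dummy_rep_lex {α : Type*} [LinearOrder α] [OrderTop α]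
    (g : Equiv.Perm α) (hg : g ⊤ = ⊤) (s : Finset α) (m : ℕ) :
    (s.image g).sort (· ≤ ·) ++ List.replicate m (⊤ : α) =
        (s.sort (· ≤ ·) ++ List.replicate m (⊤ : α)).map g ∨
      List.Lex (· < ·) ((s.image g).sort (· ≤ ·) ++ List.replicate m (⊤ : α))
        ((s.sort (· ≤ ·) ++ List.replicate m (⊤ : α)).map g) := by
  rw [List.map_append, List.map_replicate, hg]
  have hperm : ((s.image g).sort (· ≤ ·)).Perm ((s.sort (· ≤ ·)).map g) := by
    simpa [Finset.map_eq_image] using s.sort_map_perm g.toEmbedding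
  obtain heq | hlex := (Finset.sortedLT_sort _).sortedLE.eq_or_lex_of_perm hperm
  · exact .inl (congrArg (· ++ _) heq)
  · exact .inr (hlex.append_of_length_eq hperm.length_eq _)
end

section
/- Let n be a natural number and let f : Fin n → ℕ satisfy: (i) f(i) ≥ 1 for all i, and (ii) for every i, if f(j) ≠ f(i) for all j < i, then f(i) = 1 + the number of distinct values among f(j) for j < i (i.e., each value appearing for the first time is the smallest positive integer not used before). Let f' : Fin n → ℕ satisfy f'(i) ≥ 1 for all i, and suppose f and f' have the same kernel, i.e., for all i, j, f(i) = f(j) if and only if f'(i) = f'(j). Then the list (f(0), f(1), …, f(n−1)) ≤lex the list (f'(0), f'(1), …, f'(n−1)). -/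
private lemma lex_ofFn_of_lt {n : ℕ} (f g : Fin n → ℕ) (i : Fin n)
    (h : ∀ j, j < i → f j = g j) (hi : f i < g i) :
    List.Lex (· < ·) (List.ofFn f) (List.ofFn g) := by
  induction n with
  | zero => exact absurd i.isLt (by simp)
  | succ m ih =>
    rw [List.ofFn_succ, List.ofFn_succ]
    rcases Fin.eq_zero_or_eq_succ i with rfl | ⟨j, rfl⟩
    · exact List.Lex.rel hi
    · have h0 : f 0 = g 0 := h 0 (Fin.succ_pos j)
      rw [h0]
      exact List.Lex.cons (ih (f ∘ Fin.succ) (g ∘ Fin.succ) j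
        (fun k hk => h k.succ (by simpa using hk)) hi)

/-- A canonical (first-occurrence) labelling is lexicographically minimal among
all positive-integer labellings with the same kernel. -/
theorem canonical_labelling_lex_min (n : ℕ) (f f' : Fin n → ℕ)
    (hf1 : ∀ i, 1 ≤ f i)
    (hf2 : ∀ i : Fin n, (∀ j, j < i → f j ≠ f i) →
      f i = 1 + ((Finset.univ.filter (fun j : Fin n => j < i)).image f).card)
    (hf'1 : ∀ i, 1 ≤ f' i)
    (hker : ∀ i j, f i = f j ↔ f' i = f' j) :
    List.ofFn f = List.ofFn f' ∨ List.Lex (· < ·) (List.ofFn f) (List.ofFn f') := by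
  classical
  set S : Fin n → Finset ℕ :=
    fun i => (Finset.univ.filter (fun j : Fin n => j < i)).image f with hS
  -- every value occurring before i is at most the number of distinct values before i
  have hbound : ∀ i : Fin n, ∀ v ∈ S i, v ≤ (S i).card := by
    intro i v hv
    simp only [hS, Finset.mem_image, Finset.mem_filter, Finset.mem_univ, true_and] at hv
    obtain ⟨j, hji, hfj⟩ := hv
    -- take the first occurrence of the value v among indices < i
    have hex : ∃ m : ℕ, ∃ h : m < n, f ⟨m, h⟩ = v ∧ (⟨m, h⟩ : Fin n) < i :=
      ⟨j, j.isLt, by simpa using And.intro hfj hji⟩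
    classical
    set m : ℕ := Nat.find hex with hm
    obtain ⟨hmn, hfm, hmi⟩ := Nat.find_spec hex
    set j' : Fin n := ⟨m, hmn⟩
    have hfirst : ∀ k : Fin n, k < j' → f k ≠ f j' := by
      intro k hk hfk
      have : (k : ℕ) < m := hk
      exact Nat.find_min hex this ⟨k.isLt, by simpa [hfm] using And.intro hfk (lt_trans hk hmi)⟩
    have hval : f j' = 1 + (S j').card := hf2 j' hfirst
    have hnotmem : f j' ∉ S j' := by
      simp only [hS, Finset.mem_image, Finset.mem_filter, Finset.mem_univ, true_and]
      rintro ⟨k, hk, hfk⟩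
      exact hfirst k hk hfk
    have hsub : insert (f j') (S j') ⊆ S i := by
      intro x hx
      rcases Finset.mem_insert.mp hx with rfl | hx
      · simp only [hS, Finset.mem_image, Finset.mem_filter, Finset.mem_univ, true_and]
        exact ⟨j', hmi, rfl⟩
      · simp only [hS, Finset.mem_image, Finset.mem_filter, Finset.mem_univ, true_and] at hx ⊢
        obtain ⟨k, hk, hfk⟩ := hx
        exact ⟨k, lt_trans hk hmi, hfk⟩
    have hcard : (S j').card + 1 ≤ (S i).card := by
      have := Finset.card_le_card hsub
      rwa [Finset.card_insert_of_notMem hnotmem] at this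
    calc v = f j' := by rw [hfm]
      _ = 1 + (S j').card := hval
      _ ≤ (S i).card := by omega
  by_cases heq : ∀ i, f i = f' i
  · left; exact congrArg List.ofFn (funext heq)
  · right
    push_neg at heq
    obtain ⟨i₀, hi₀⟩ := heq
    have hex : ∃ m : ℕ, ∃ h : m < n, f ⟨m, h⟩ ≠ f' ⟨m, h⟩ := ⟨i₀, i₀.isLt, hi₀⟩
    set m : ℕ := Nat.find hex with hm
    obtain ⟨hmn, hne⟩ := Nat.find_spec hex
    set i : Fin n := ⟨m, hmn⟩
    have hagree : ∀ j : Fin n, j < i → f j = f' j := by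
      intro j hj
      by_contra h
      exact Nat.find_min hex (show (j : ℕ) < m from hj) ⟨j.isLt, h⟩
    -- f i does not occur before i
    have hnew : ∀ j, j < i → f j ≠ f i := by
      intro j hj hfj
      have h1 : f' j = f' i := (hker j i).mp hfj
      have : f i = f' i := by rw [← hfj, hagree j hj, h1]
      exact hne this
    have hval : f i = 1 + (S i).card := hf2 i hnew
    -- f' i does not occur before i either
    have hnew' : f' i ∉ S i := by
      simp only [hS, Finset.mem_image, Finset.mem_filter, Finset.mem_univ, true_and]
      rintro ⟨j, hj, hfj⟩
      have h1 : f' j = f' i := by rw [← hagree j hj]; exact hfj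
      exact hnew j hj ((hker j i).mpr h1)
    -- S i is exactly {1, ..., (S i).card}
    have hSeq : S i = Finset.Icc 1 (S i).card := by
      apply Finset.eq_of_subset_of_card_le
      · intro v hv
        rw [Finset.mem_Icc]
        refine ⟨?_, hbound i v hv⟩
        simp only [hS, Finset.mem_image, Finset.mem_filter, Finset.mem_univ, true_and] at hv
        obtain ⟨k, _, hfk⟩ := hv
        rw [← hfk]; exact hf1 k
      · simp
    have hlt : f i < f' i := by
      rcases lt_trichotomy (f i) (f' i) with h | h | h
      · exact h
      · exact absurd h hne
      · exfalso
        apply hnew'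
        rw [hSeq, Finset.mem_Icc]
        exact ⟨hf'1 i, by omega⟩
    exact lex_ofFn_of_lt f f' i hagree hlt
end

section
/- Let n be a natural number, let g be a permutation of Fin n, and let f : Fin n → ℕ be a canonical labelling, i.e., (i) f(i) ≥ 1 for all i, and (ii) for every i, if f(j) ≠ f(i) for all j < i then f(i) = 1 + the number of distinct values among f(j) for j < i. Let f_g : Fin n → ℕ be a canonical labelling (satisfying (i) and (ii)) whose kernel is the g-translate of that of f, i.e., for all i, j, f_g(i) = f_g(j) if and only if f(g⁻¹(i)) = f(g⁻¹(j)). Then the list (f_g(0), …, f_g(n−1)) ≤lex the list (f(g⁻¹(0)), …, f(g⁻¹(n−1))). -/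
private lemma listlex_of_pointwise : ∀ {n : ℕ} (a b : Fin n → ℕ),
    (∀ i : Fin n, (∀ j, j < i → a j = b j) → a i ≤ b i) →
    List.ofFn a = List.ofFn b ∨ List.Lex (· < ·) (List.ofFn a) (List.ofFn b) := by
  intro n
  induction n with
  | zero => intro a b _; left; simp
  | succ m ih =>
    intro a b hab
    have h0 : a 0 ≤ b 0 := hab 0 (fun j hj => absurd hj (by simp))
    rcases lt_or_eq_of_le h0 with h | h
    · right
      rw [List.ofFn_succ, List.ofFn_succ]
      exact List.Lex.rel h
    · have key : ∀ i : Fin m, (∀ j, j < i → a j.succ = b j.succ) → a i.succ ≤ b i.succ := by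
        intro i hi
        apply hab i.succ
        intro j hj
        rcases Fin.eq_zero_or_eq_succ j with rfl | ⟨j', rfl⟩
        · exact h
        · exact hi j' (by simpa [Fin.succ_lt_succ_iff] using hj)
      rcases ih (fun i => a i.succ) (fun i => b i.succ) key with heq | hlex
      · left; rw [List.ofFn_succ, List.ofFn_succ, h, heq]
      · right
        rw [List.ofFn_succ, List.ofFn_succ, h]
        exact List.Lex.cons hlex

private lemma canon_le_card {n : ℕ} (f_g : Fin n → ℕ)
    (hfg2 : ∀ i : Fin n, (∀ j, j < i → f_g j ≠ f_g i) →
      f_g i = 1 + ((Finset.univ.filter (fun j : Fin n => j < i)).image f_g).card) :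
    ∀ j : Fin n, f_g j ≤ ((Finset.univ.filter (fun k : Fin n => k ≤ j)).image f_g).card := by
  suffices H : ∀ m : ℕ, ∀ j : Fin n, (j : ℕ) < m →
      f_g j ≤ ((Finset.univ.filter (fun k : Fin n => k ≤ j)).image f_g).card by
    intro j; exact H ((j : ℕ) + 1) j (Nat.lt_succ_self _)
  intro m
  induction m with
  | zero => intro j hj; omega
  | succ m ihm =>
    intro j hjm
    have ih : ∀ k : Fin n, k < j →
        f_g k ≤ ((Finset.univ.filter (fun m : Fin n => m ≤ k)).image f_g).card := by
      intro k hk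
      exact ihm k (by omega)
    by_cases hnew : ∀ k, k < j → f_g k ≠ f_g j
    · have hj := hfg2 j hnew
      have hsplit : Finset.univ.filter (fun k : Fin n => k ≤ j)
          = insert j (Finset.univ.filter (fun k : Fin n => k < j)) := by
        ext k
        simp [le_iff_lt_or_eq, or_comm]
      have hnm : f_g j ∉ (Finset.univ.filter (fun k : Fin n => k < j)).image f_g := by
        simp only [Finset.mem_image, Finset.mem_filter, Finset.mem_univ, true_and, not_exists]
        rintro k ⟨hk, hke⟩
        exact hnew k hk hke
      rw [hsplit, Finset.image_insert, Finset.card_insert_of_notMem hnm, hj]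
      omega
    · push_neg at hnew
      obtain ⟨k, hk, hke⟩ := hnew
      rw [← hke]
      calc f_g k ≤ ((Finset.univ.filter (fun m : Fin n => m ≤ k)).image f_g).card := ih k hk
        _ ≤ _ := Finset.card_le_card (Finset.image_subset_image (by
              intro m hm
              simp only [Finset.mem_filter, Finset.mem_univ, true_and] at hm ⊢
              exact le_trans hm (le_of_lt hk)))

/-- Occurrence representation of partitions: the canonical labelling of the
translated partition is lexicographically at most the translated canonical
labelling of the original partition. -/
theorem partition_occurrence_rep_lex (n : ℕ) (g : Equiv.Perm (Fin n))
    (f : Fin n → ℕ)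
    (hf1 : ∀ i, 1 ≤ f i)
    (hf2 : ∀ i : Fin n, (∀ j, j < i → f j ≠ f i) →
      f i = 1 + ((Finset.univ.filter (fun j : Fin n => j < i)).image f).card)
    (f_g : Fin n → ℕ)
    (hfg1 : ∀ i, 1 ≤ f_g i)
    (hfg2 : ∀ i : Fin n, (∀ j, j < i → f_g j ≠ f_g i) →
      f_g i = 1 + ((Finset.univ.filter (fun j : Fin n => j < i)).image f_g).card)
    (hker : ∀ i j, f_g i = f_g j ↔ f (g⁻¹ i) = f (g⁻¹ j)) :
    List.ofFn f_g = List.ofFn (fun i => f (g⁻¹ i)) ∨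
      List.Lex (· < ·) (List.ofFn f_g) (List.ofFn (fun i => f (g⁻¹ i))) := by
  apply listlex_of_pointwise
  intro i hagree
  by_cases hnew : ∀ j, j < i → f_g j ≠ f_g i
  · have hi := hfg2 i hnew
    set S := (Finset.univ.filter (fun j : Fin n => j < i)).image f_g with hS
    have hnot : f (g⁻¹ i) ∉ S := by
      intro hm
      obtain ⟨j, hj, hje⟩ := Finset.mem_image.mp hm
      simp only [Finset.mem_filter, Finset.mem_univ, true_and] at hj
      rw [hagree j hj] at hje
      exact hnew j hj ((hker j i).mpr hje)
    have hboundS : ∀ x ∈ S, x ≤ S.card := by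
      intro x hx
      obtain ⟨j, hj, rfl⟩ := Finset.mem_image.mp hx
      simp only [Finset.mem_filter, Finset.mem_univ, true_and] at hj
      calc f_g j ≤ ((Finset.univ.filter (fun k : Fin n => k ≤ j)).image f_g).card :=
            canon_le_card f_g hfg2 j
        _ ≤ S.card := Finset.card_le_card (Finset.image_subset_image (by
              intro k hk
              simp only [Finset.mem_filter, Finset.mem_univ, true_and] at hk ⊢
              exact lt_of_le_of_lt hk hj))
    have h1S : ∀ x ∈ S, 1 ≤ x := by
      intro x hx
      obtain ⟨j, _, rfl⟩ := Finset.mem_image.mp hx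
      exact hfg1 j
    have hsub : S ⊆ Finset.Icc 1 S.card :=
      fun x hx => Finset.mem_Icc.mpr ⟨h1S x hx, hboundS x hx⟩
    have heq : S = Finset.Icc 1 S.card :=
      Finset.eq_of_subset_of_card_le hsub (by simp)
    have hgt : ¬ (f (g⁻¹ i) ≤ S.card) := by
      intro hle
      exact hnot (heq ▸ Finset.mem_Icc.mpr ⟨hf1 _, hle⟩)
    rw [hi]
    omega
  · push_neg at hnew
    obtain ⟨j, hj, hje⟩ := hnew
    exact le_of_eq (calc f_g i = f_g j := hje.symm
      _ = f (g⁻¹ j) := hagree j hj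
      _ = f (g⁻¹ i) := (hker j i).mp hje)
end

section
/- Let α be a linearly ordered type with a least element ⊥, let g be a permutation of α, let l be a list over α, and let m be a natural number. Then map g l ++ replicate(m, ⊥) ≤lex map g (l ++ replicate(m, ⊥)), where replicate(m, ⊥) is the list of m copies of ⊥, ++ is list concatenation, and map g applies g to every element of a list. -/
lemma rep_lex {α : Type*} [LinearOrder α] (L : List α) (m : ℕ) (a b : α) (h : a ≤ b) :
    L ++ List.replicate m a = L ++ List.replicate m b ∨
      List.Lex (· < ·) (L ++ List.replicate m a) (L ++ List.replicate m b) := by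
  rcases eq_or_lt_of_le h with rfl | hlt
  · exact Or.inl rfl
  · induction L with
    | nil =>
      cases m with
      | zero => exact Or.inl rfl
      | succ n => exact Or.inr (List.Lex.rel hlt)
    | cons x xs ih =>
      rcases ih with h1 | h1
      · exact Or.inl (by simp [h1])
      · exact Or.inr (List.Lex.cons h1)

/-- ExplicitBounded representation of sequences: padding with the least
value ⊥. -/
theorem explicit_bounded_rep_lex {α : Type*} [LinearOrder α] [OrderBot α]
    (g : Equiv.Perm α) (l : List α) (m : ℕ) :
    l.map g ++ List.replicate m (⊥ : α) =
        (l ++ List.replicate m (⊥ : α)).map g ∨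
      List.Lex (· < ·) (l.map g ++ List.replicate m (⊥ : α))
        ((l ++ List.replicate m (⊥ : α)).map g) := by
  rw [List.map_append, List.map_replicate]
  exact rep_lex _ _ _ _ bot_le
end

section
/- Let α be a linearly ordered type, let s be a multiset over α, and let g be a permutation of α. If sort s ≤lex sort(map g s), then sort s ≤lex map g (sort s), where sort t denotes the nondecreasing sorted list of the elements of the multiset t and map g applies g to every element. -/
/-!
A nondecreasing list is the lexicographically least of its permutations. Since `sort (map g s)`
is a permutation of `map g (sort s)`, it lies lexicographically between `sort s` and
`map g (sort s)`, and transitivity of the lexicographic order gives the claim.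
-/

theorem List.Pairwise.le_of_perm {α : Type*} [LinearOrder α] :
    ∀ {l l' : List α}, l.Pairwise (· ≤ ·) → l.Perm l' → l ≤ l'
  | [], _, _, hp => hp.nil_eq.le
  | a :: t, [], _, hp => absurd hp.eq_nil (List.cons_ne_nil a t)
  | a :: t, b :: t', hs, hp => by
    have hab : a ≤ b := by
      rcases List.mem_cons.mp (hp.symm.subset List.mem_cons_self) with rfl | hbt
      · exact le_rfl
      · exact List.rel_of_pairwise_cons hs hbt
    rcases hab.lt_or_eq with hlt | rfl
    · exact le_of_lt (List.Lex.rel hlt)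
    · exact List.cons_le_cons a (hs.of_cons.le_of_perm hp.cons_inv)

/-- Lemma 1 + Lemma 2(1) instantiated for the explicit representation of
multisets: the delayed lex-leader constraint on the sorted-list representation
is implied by the abstract lex-leader constraint. -/
theorem delayed_lex_leader_multiset {α : Type*} [LinearOrder α]
    (s : Multiset α) (g : Equiv.Perm α)
    (h : s.sort (· ≤ ·) = (s.map g).sort (· ≤ ·) ∨
      List.Lex (· < ·) (s.sort (· ≤ ·)) ((s.map g).sort (· ≤ ·))) :
    s.sort (· ≤ ·) = (s.sort (· ≤ ·)).map g ∨
      List.Lex (· < ·) (s.sort (· ≤ ·)) ((s.sort (· ≤ ·)).map g) := by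
  have hperm : ((s.map g).sort (· ≤ ·)).Perm ((s.sort (· ≤ ·)).map g) := by
    rw [← Multiset.coe_eq_coe, Multiset.sort_eq, ← Multiset.map_coe, Multiset.sort_eq]
  have hsort_le : (s.map g).sort (· ≤ ·) ≤ (s.sort (· ≤ ·)).map g :=
    (Multiset.pairwise_sort _ _).le_of_perm hperm
  exact le_iff_eq_or_lt.mp ((le_iff_eq_or_lt.mpr h).trans hsort_le)
end
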